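/- Let R be a G-graded ring of finite support that is graded-local (has a unique graded-maximal right ideal). Then R is graded nil-good if and only if J^g(R) is a graded-nil ideal. -/

import Mathlib

/-- A ring is *nil-good* if every element is either nilpotent or a sum of a unit
and a nilpotent. -/
def IsNilGood (R : Type*) [Ring R] : Prop :=
  ∀ a : R, IsNilpotent a ∨ ∃ u n : R, IsUnit u ∧ IsNilpotent n ∧ a = u + n

/-- A `G`-graded ring (given by the family of components `𝒜`) is *graded nil-good*
if every homogeneous element is either nilpotent or a sum of a homogeneous unit
and a homogeneous nilpotent. -/
def IsGradedNilGood {G R : Type*} [Ring R] (𝒜 : G → AddSubgroup R) : Prop :=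
  ∀ a : R, (∃ g, a ∈ 𝒜 g) →
    IsNilpotent a ∨
      ∃ u n : R, IsUnit u ∧ (∃ g, u ∈ 𝒜 g) ∧ IsNilpotent n ∧ (∃ g, n ∈ 𝒜 g) ∧ a = u + n

/-- A graded-maximal ideal: a proper homogeneous ideal maximal among proper
homogeneous ideals. -/
def IsGradedMaximal {G R : Type*} [AddGroup G] [DecidableEq G] [Ring R]
    (𝒜 : G → AddSubgroup R) [GradedRing 𝒜] (I : Ideal R) : Prop :=
  Ideal.IsHomogeneous 𝒜 I ∧ I ≠ ⊤ ∧
    ∀ J : Ideal R, Ideal.IsHomogeneous 𝒜 J → J ≠ ⊤ → I ≤ J → J = I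

/-- The graded Jacobson radical: the intersection of all graded-maximal ideals. -/
def gradedJacobson {G R : Type*} [AddGroup G] [DecidableEq G] [Ring R]
    (𝒜 : G → AddSubgroup R) [GradedRing 𝒜] : Ideal R :=
  sInf {I : Ideal R | IsGradedMaximal 𝒜 I}

/-! Let `M` be the unique graded-maximal ideal, so that `J^g(R) = M`. A homogeneous `x ∉ M`
generates a homogeneous ideal contained in no graded-maximal ideal, hence `z * x = 1` for some `z`,
which can be taken homogeneous by projecting onto degree `-deg x`. Moreover `z ∉ M`: otherwise
`1 - x * z ∉ M` would have a left inverse, which annihilates `x` because `(1 - x * z) * x = 0`.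
So `z` is left invertible too, and `x` is a unit. Hence a homogeneous element is a non-unit iff it
lies in `M`; in particular homogeneous nilpotents lie in `M`, and both implications follow from
the fact that `M` contains no unit. -/

open DirectSum

instance HomogeneousIdeal.isCoatomic {ι σ A : Type*} [Semiring A] [SetLike σ A]
    [AddSubmonoidClass σ A] (𝒜 : ι → σ) [DecidableEq ι] [AddMonoid ι] [GradedRing 𝒜] :
    IsCoatomic (HomogeneousIdeal 𝒜) := by
  refine CompleteLattice.coatomic_of_top_compact ?_
  rw [CompleteLattice.isCompactElement_iff_le_of_directed_sSup_le]
  intro s hne hdir htop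
  obtain ⟨_, ⟨I, hI, rfl⟩, hle⟩ :=
    (CompleteLattice.isCompactElement_iff_le_of_directed_sSup_le _ _).1 Ideal.isCompactElement_top
      (HomogeneousIdeal.toIdeal (𝒜 := 𝒜) '' s) (hne.image _) (hdir.mono_comp fun _ _ ↦ id)
      (by rw [sSup_image, ← HomogeneousIdeal.toIdeal_sSup,
            ← HomogeneousIdeal.toIdeal_top (𝒜 := 𝒜)]
          exact htop)
  exact ⟨I, hI, ((HomogeneousIdeal.eq_top_iff I).2 (top_le_iff.1 hle)).ge⟩

section

variable {G R : Type*} [AddGroup G] [DecidableEq G] [Ring R] {𝒜 : G → AddSubgroup R}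
  [GradedRing 𝒜]

theorem Ideal.IsHomogeneous.exists_isGradedMaximal_le {I : Ideal R} (hI : I.IsHomogeneous 𝒜)
    (hI' : I ≠ ⊤) : ∃ M, IsGradedMaximal 𝒜 M ∧ I ≤ M := by
  obtain ⟨N : HomogeneousIdeal 𝒜, hN, hIN⟩ :=
    (eq_top_or_exists_le_coatom (⟨I, hI⟩ : HomogeneousIdeal 𝒜)).resolve_left
      fun h ↦ hI' ((HomogeneousIdeal.eq_top_iff _).1 h)
  refine ⟨N.toIdeal, ⟨N.isHomogeneous, (HomogeneousIdeal.eq_top_iff N).not.1 hN.1, ?_⟩, hIN⟩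
  intro J hJ hJ' hNJ
  by_contra hne
  exact hJ' ((HomogeneousIdeal.eq_top_iff ⟨J, hJ⟩).1 (hN.2 ⟨J, hJ⟩ (lt_of_le_of_ne hNJ
    fun h ↦ hne (congrArg HomogeneousIdeal.toIdeal h).symm)))

theorem DirectSum.coe_decompose_neg_mul_eq_one {g : G} {a x : R} (hx : x ∈ 𝒜 g)
    (h : a * x = 1) : (decompose 𝒜 a (-g) : R) * x = 1 := by
  rw [← coe_decompose_mul_add_of_right_mem 𝒜 hx, neg_add_cancel, h,
    decompose_of_mem_same 𝒜 SetLike.GradedOne.one_mem]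

theorem exists_mul_eq_one_of_notMem {M : Ideal R} (huniq : ∀ I, IsGradedMaximal 𝒜 I → I = M)
    {g : G} {x : R} (hx : x ∈ 𝒜 g) (hxM : x ∉ M) : ∃ z ∈ 𝒜 (-g), z * x = 1 := by
  have hspan : Ideal.span {x} = ⊤ := by
    by_contra hne
    obtain ⟨N, hN, hxN⟩ := (Ideal.homogeneous_span 𝒜 {x} (by rintro _ rfl; exact ⟨g, hx⟩)
      ).exists_isGradedMaximal_le hne
    exact hxM (huniq N hN ▸ hxN (Ideal.mem_span_singleton_self x))
  obtain ⟨a, ha⟩ := Ideal.mem_span_singleton'.1 (hspan ▸ Submodule.mem_top : (1 : R) ∈ _)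
  exact ⟨_, SetLike.coe_mem _, coe_decompose_neg_mul_eq_one hx ha⟩

namespace IsGradedMaximal

variable {M : Ideal R} (hM : IsGradedMaximal 𝒜 M)
  (huniq : ∀ I, IsGradedMaximal 𝒜 I → I = M)
include hM huniq

theorem gradedJacobson_eq : gradedJacobson 𝒜 = M := by
  rw [gradedJacobson, show {I | IsGradedMaximal 𝒜 I} = {M} from
    Set.ext fun I ↦ ⟨huniq I, fun h ↦ h ▸ hM⟩, sInf_singleton]

theorem isUnit_of_notMem {g : G} {x : R} (hx : x ∈ 𝒜 g) (hxM : x ∉ M) : IsUnit x := by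
  have one_notMem : (1 : R) ∉ M := (Ideal.ne_top_iff_one M).1 hM.2.1
  obtain ⟨z, hz, hzx⟩ := exists_mul_eq_one_of_notMem huniq hx hxM
  have hzM : z ∉ M := by
    intro hzM
    have hxz : x * z ∈ 𝒜 0 := add_neg_cancel g ▸ SetLike.mul_mem_graded hx hz
    have h1 : 1 - x * z ∉ M := fun h ↦
      one_notMem (sub_add_cancel (1 : R) (x * z) ▸ M.add_mem h (M.mul_mem_left x hzM))
    obtain ⟨t, -, ht⟩ :=
      exists_mul_eq_one_of_notMem huniq (sub_mem SetLike.GradedOne.one_mem hxz) h1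
    have hx0 : x = 0 := by
      calc x = t * (1 - x * z) * x := by rw [ht, one_mul]
        _ = 0 := by rw [mul_assoc, sub_mul, mul_assoc, hzx, one_mul, mul_one, sub_self, mul_zero]
    exact one_notMem (by rw [← hzx, hx0, mul_zero]; exact M.zero_mem)
  obtain ⟨w, -, hwz⟩ := exists_mul_eq_one_of_notMem huniq hz hzM
  exact ⟨⟨x, z, left_inv_eq_right_inv hwz hzx ▸ hwz, hzx⟩, rfl⟩

theorem mem_of_isNilpotent {g : G} {n : R} (hn : n ∈ 𝒜 g) (hnil : IsNilpotent n) : n ∈ M := by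
  by_contra hnM
  obtain ⟨k, hk⟩ := hnil
  exact hM.2.1 (M.eq_top_of_isUnit_mem M.zero_mem (hk ▸ (hM.isUnit_of_notMem huniq hn hnM).pow k))

end IsGradedMaximal

end

theorem stmt11_general {G R : Type*} [AddGroup G] [DecidableEq G] [Ring R]
    (𝒜 : G → AddSubgroup R) [GradedRing 𝒜]
    (hloc : ∃! I : Ideal R, IsGradedMaximal 𝒜 I) :
    IsGradedNilGood 𝒜 ↔
      ∀ a ∈ gradedJacobson 𝒜, (∃ g, a ∈ 𝒜 g) → IsNilpotent a := by
  obtain ⟨M, hM, huniq⟩ := hloc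
  rw [hM.gradedJacobson_eq huniq]
  constructor
  · intro hng a haM ha
    refine (hng a ha).resolve_right ?_
    rintro ⟨u, n, hu, -, hn, ⟨g, hng⟩, rfl⟩
    have hnM := hM.mem_of_isNilpotent huniq hng hn
    exact hM.2.1 (M.eq_top_of_isUnit_mem (add_sub_cancel_right u n ▸ M.sub_mem haM hnM) hu)
  · rintro hnil a ⟨g, ha⟩
    by_cases haM : a ∈ M
    · exact .inl (hnil a haM ⟨g, ha⟩)
    · exact .inr ⟨a, 0, hM.isUnit_of_notMem huniq ha haM, ⟨g, ha⟩, .zero, ⟨g, zero_mem _⟩,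
        (add_zero a).symm⟩

/-- A graded-local `G`-graded ring of finite support is graded nil-good if and only
if its graded Jacobson radical is a graded-nil ideal. -/
theorem stmt11 {G R : Type*} [AddGroup G] [DecidableEq G] [Ring R]
    (𝒜 : G → AddSubgroup R) [GradedRing 𝒜]
    (hfin : {g : G | 𝒜 g ≠ ⊥}.Finite)
    (hloc : ∃! I : Ideal R, IsGradedMaximal 𝒜 I) :
    IsGradedNilGood 𝒜 ↔
      ∀ a ∈ gradedJacobson 𝒜, (∃ g, a ∈ 𝒜 g) → IsNilpotent a :=
  stmt11_general 𝒜 hloc
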